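/- Let d ≥ 1 and let H be a finite hypergraph of d-intervals. Then ν*(H) ≥ τ(H)/d; equivalently, τ(H) ≤ d·ν*(H). -/

import Mathlib

/-!
By LP duality, `ν*` is the fractional covering number. Since `H` is finite, finitely many points
realise every possible set of edges through a point, and Farkas' lemma (proved by Fourier–Motzkin
elimination) yields weights on them of total at most `ν*` giving every edge weight at least `1`.
A `d`-interval has at most `d` components, so one of them gets weight at least `1/d`. Intervals
of weight at least `1` are then pierced greedily by at most the total weight many points: the
least right endpoint `b` pierces every interval starting at or before `b`, the interval ending at
`b` carries weight `1` in `(-∞, b]`, and the remaining intervals lie in `(b, ∞)`.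
-/

/-- A `d`-interval: a union of at most `d` pairwise disjoint closed intervals
on the real line. -/
def IsDInterval (d : ℕ) (h : Set ℝ) : Prop :=
  ∃ (n : ℕ) (a b : Fin n → ℝ), n ≤ d ∧ (∀ i, a i ≤ b i) ∧
    (Set.univ : Set (Fin n)).PairwiseDisjoint (fun i => Set.Icc (a i) (b i)) ∧
    h = ⋃ i, Set.Icc (a i) (b i)

/-- The covering (transversal) number: the minimum size of a finite set of
points meeting every edge. -/
noncomputable def tau {α : Type*} (H : Set (Set α)) : ℕ :=
  sInf {n | ∃ C : Finset α, (∀ e ∈ H, ∃ x ∈ C, x ∈ e) ∧ C.card = n}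

/-- The fractional matching number: the supremum of `∑ₑ g e` over nonnegative
functions `g` supported on the edges of `H` with `∑_{e ∋ x} g e ≤ 1` for every
point `x`. -/
noncomputable def nuStar {α : Type*} (H : Set (Set α)) : ℝ :=
  sSup {t | ∃ g : Set α → ℝ, (∀ e, 0 ≤ g e) ∧ (∀ e, g e ≠ 0 → e ∈ H) ∧
    (∀ x : α, ∑ᶠ e ∈ {e : Set α | x ∈ e}, g e ≤ 1) ∧ t = ∑ᶠ e, g e}

open Finset Matrix Function
open scoped Classical

theorem exists_forall_le_and_forall_le {R β γ : Type*} [ConditionallyCompleteLattice R]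
    [Finite β] [Finite γ] (L : β → R) (U : γ → R) (h : ∀ b c, L b ≤ U c) :
    ∃ t, (∀ b, L b ≤ t) ∧ ∀ c, t ≤ U c := by
  cases isEmpty_or_nonempty β
  · exact ⟨⨅ c, U c, isEmptyElim, fun c => ciInf_le (Finite.bddBelow_range U) c⟩
  · exact ⟨⨆ b, L b, fun b => le_ciSup (Finite.bddAbove_range L) b,
      fun c => ciSup_le fun b => h b c⟩

namespace FourierMotzkin

variable {ι : Type*}

abbrev Row (a : ι → ℝ) : Type _ := {i // a i = 0} ⊕ {i // 0 < a i} × {j // a j < 0}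

/-- Eliminating a variable with coefficient column `a`: keep the rows where it does not occur,
and for each pair of rows where it occurs with opposite signs take the nonnegative combination
of the two that cancels it. -/
noncomputable def combination (a : ι → ℝ) : Matrix (Row a) ι ℝ
  | .inl i => Pi.single i.1 1
  | .inr (i, j) => Pi.single i.1 (-a j) + Pi.single j.1 (a i)

theorem combination_nonneg (a : ι → ℝ) (r : Row a) (i : ι) : 0 ≤ combination a r i := by
  rcases r with i₀ | ⟨i₀, j₀⟩
  · simp only [combination, Pi.single_apply]
    split_ifs <;> norm_num
  · have := i₀.2
    have := j₀.2
    simp only [combination, Pi.add_apply, Pi.single_apply]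
    split_ifs <;> linarith

variable [Fintype ι]

theorem combination_mulVec_inl (a v : ι → ℝ) (i : {i // a i = 0}) :
    (combination a *ᵥ v) (.inl i) = v i := by
  simp [combination, mulVec, single_dotProduct]

theorem combination_mulVec_inr (a v : ι → ℝ) (i : {i // 0 < a i}) (j : {j // a j < 0}) :
    (combination a *ᵥ v) (.inr (i, j)) = -a j * v i + a i * v j := by
  simp only [mulVec, combination, add_dotProduct, single_dotProduct]

theorem combination_mulVec_self (a : ι → ℝ) : combination a *ᵥ a = 0 := by
  ext (i | ⟨i, j⟩)
  · simpa [combination_mulVec_inl] using i.2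
  · simp only [combination_mulVec_inr, Pi.zero_apply]
    ring

theorem exists_add_smul_le_of_combination_mulVec_le {a s c : ι → ℝ}
    (h : combination a *ᵥ s ≤ combination a *ᵥ c) : ∃ t : ℝ, s + t • a ≤ c := by
  obtain ⟨t, hneg, hpos⟩ := exists_forall_le_and_forall_le
    (fun j : {j // a j < 0} => (c j - s j) / a j) (fun i : {i // 0 < a i} => (c i - s i) / a i)
    fun j i => by
      have hij := h (.inr (i, j))
      rw [combination_mulVec_inr, combination_mulVec_inr] at hij
      rw [div_le_iff_of_neg j.2, div_mul_eq_mul_div, div_le_iff₀ i.2]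
      linarith
  refine ⟨t, fun i => ?_⟩
  simp only [Pi.add_apply, Pi.smul_apply, smul_eq_mul]
  rcases lt_trichotomy (a i) 0 with hi | hi | hi
  · linarith [(div_le_iff_of_neg hi).1 (hneg ⟨i, hi⟩)]
  · simpa [hi, combination_mulVec_inl] using h (.inl ⟨i, hi⟩)
  · linarith [(le_div_iff₀ hi).1 (hpos ⟨i, hi⟩)]

end FourierMotzkin

open FourierMotzkin in
theorem Matrix.exists_nonneg_vecMul_eq_zero_of_not_exists_mulVec_le {ι κ : Type*} [Fintype ι]
    [Fintype κ] (M : Matrix ι κ ℝ) (c : ι → ℝ) (h : ¬ ∃ y, M *ᵥ y ≤ c) :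
    ∃ u : ι → ℝ, 0 ≤ u ∧ u ᵥ* M = 0 ∧ u ⬝ᵥ c < 0 := by
  induction hn : Fintype.card κ generalizing ι κ with
  | zero =>
    have : IsEmpty κ := Fintype.card_eq_zero_iff.1 hn
    obtain ⟨i, hi⟩ : ∃ i, c i < 0 := by simpa [Pi.le_def, mulVec, dotProduct] using h
    exact ⟨Pi.single i 1, Pi.single_nonneg.2 zero_le_one, Subsingleton.elim _ _,
      by simpa [single_dotProduct] using hi⟩
  | succ n ih =>
    obtain ⟨k₀⟩ : Nonempty κ := Fintype.card_pos_iff.1 (by omega)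
    let a : ι → ℝ := fun i => M i k₀
    let M' : Matrix ι {k // k ≠ k₀} ℝ := M.submatrix id Subtype.val
    let W := combination a
    have hsplit (y : κ → ℝ) : M *ᵥ y = M' *ᵥ (fun k => y k) + y k₀ • a := by
      ext i
      simp [mulVec, dotProduct, Fintype.sum_eq_add_sum_subtype_ne _ k₀, M', a, add_comm, mul_comm]
    have hW : ¬ ∃ y', (W * M') *ᵥ y' ≤ W *ᵥ c := by
      rintro ⟨y', hy'⟩
      rw [← mulVec_mulVec] at hy'
      obtain ⟨t, ht⟩ := exists_add_smul_le_of_combination_mulVec_le hy'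
      refine h ⟨fun k => if hk : k = k₀ then t else y' ⟨k, hk⟩, ?_⟩
      simpa [hsplit, fun k : {k // k ≠ k₀} => k.2] using ht
    have hcard : Fintype.card {k // k ≠ k₀} = n := by simp [Fintype.card_subtype_compl, hn]
    obtain ⟨v, hv0, hvM, hvc⟩ := ih (W * M') (W *ᵥ c) hW hcard
    refine ⟨v ᵥ* W, fun i => sum_nonneg fun r _ => mul_nonneg (hv0 r) (combination_nonneg a r i),
      funext fun k => ?_, by rwa [← dotProduct_mulVec]⟩
    by_cases hk : k = k₀
    · subst hk
      have : (v ᵥ* W) ⬝ᵥ a = 0 := by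
        rw [← dotProduct_mulVec, combination_mulVec_self, dotProduct_zero]
      simpa [vecMul, dotProduct, a, mul_comm] using this
    · have := congrFun hvM ⟨k, hk⟩
      rw [← vecMul_vecMul] at this
      simpa [vecMul, dotProduct, M'] using this

theorem Matrix.exists_cover_le_of_forall_packing_le {ι κ : Type*} [Fintype ι] [Fintype κ]
    (A : Matrix ι κ ℝ) (ν : ℝ) (h : ∀ g : ι → ℝ, 0 ≤ g → g ᵥ* A ≤ 1 → ∑ i, g i ≤ ν) :
    ∃ w : κ → ℝ, 0 ≤ w ∧ 1 ≤ A *ᵥ w ∧ ∑ k, w k ≤ ν := by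
  by_contra hno
  let M : Matrix (ι ⊕ κ ⊕ Unit) κ ℝ := fromRows (-A) (fromRows (-1) (of fun _ _ => 1))
  let c : ι ⊕ κ ⊕ Unit → ℝ := Sum.elim (-1) (Sum.elim 0 fun _ => ν)
  obtain ⟨u, hu0, huM, huc⟩ := M.exists_nonneg_vecMul_eq_zero_of_not_exists_mulVec_le c <| by
    rintro ⟨w, hw⟩
    simp only [M, c, fromRows_mulVec, Sum.elim_le_elim_iff, neg_mulVec, one_mulVec] at hw
    refine hno ⟨w, neg_nonpos.1 hw.2.1, neg_le_neg_iff.1 hw.1, ?_⟩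
    simpa [mulVec, dotProduct] using hw.2.2 ()
  -- The certificate says `g ᵥ* A + s = μ • 1` and `μ * ν < ∑ g`, so `μ⁻¹ • g` (or, when `μ = 0`,
  -- every multiple of `g`) is a packing of value exceeding `ν`.
  obtain ⟨g, s, μ, rfl⟩ : ∃ g s μ, u = Sum.elim g (Sum.elim s fun _ => μ) :=
    ⟨u ∘ .inl, u ∘ .inr ∘ .inl, u (.inr (.inr ())), by ext (i | k | _) <;> rfl⟩
  have hg0 : 0 ≤ g := fun i => hu0 (.inl i)
  have hμ0 : 0 ≤ μ := hu0 (.inr (.inr ()))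
  have hgA : g ᵥ* A ≤ μ • 1 := fun k => by
    have hk := congrFun huM k
    have hs := hu0 (.inr (.inl k))
    simp [M, vecMul, dotProduct, one_apply] at hk hs
    simp only [Pi.smul_apply, Pi.one_apply, smul_eq_mul, mul_one, vecMul, dotProduct]
    linarith
  have hg : μ * ν < ∑ i, g i := by simpa [c, dotProduct] using huc
  have hscaled (t : ℝ) (ht : 0 ≤ t) (htμ : t * μ ≤ 1) : t * ∑ i, g i ≤ ν := by
    have := h (t • g) (smul_nonneg ht hg0) fun k => by
      have := hgA k
      simp only [smul_vecMul, Pi.smul_apply, Pi.one_apply, smul_eq_mul, mul_one] at this ⊢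
      exact (mul_le_mul_of_nonneg_left this ht).trans htμ
    simpa [mul_sum] using this
  rcases hμ0.lt_or_eq with hμ | hμ
  · have := hscaled μ⁻¹ (inv_nonneg.2 hμ.le) (inv_mul_cancel₀ hμ.ne').le
    rw [inv_mul_le_iff₀ hμ] at this
    linarith
  · subst hμ
    have hpos : 0 < ∑ i, g i := by simpa using hg
    have := hscaled ((|ν| + 1) / ∑ i, g i) (by positivity) (by simp)
    rw [div_mul_cancel₀ _ hpos.ne'] at this
    linarith [le_abs_self ν]

section Hypergraph

variable {α : Type*} {H : Set (Set α)}

def incidentEdges (H : Set (Set α)) (x : α) : Set (Set α) := {e ∈ H | x ∈ e}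

theorem exists_finset_incidentEdges_eq (hfin : H.Finite) :
    ∃ P : Finset α, ∀ x, ∃ p ∈ P, incidentEdges H p = incidentEdges H x := by
  have : Finite (Set.range (incidentEdges H)) :=
    (hfin.finite_subsets.subset (Set.range_subset_iff.2 fun x => Set.sep_subset _ _)).to_subtype
  refine ⟨(Set.finite_range (Set.rangeSplitting (incidentEdges H))).toFinset, fun x =>
    ⟨_, by simp, Set.apply_rangeSplitting (incidentEdges H) ⟨_, x, rfl⟩⟩⟩

def IsFractionalMatching (H : Set (Set α)) (g : Set α → ℝ) : Prop :=
  (∀ e, 0 ≤ g e) ∧ (∀ e, g e ≠ 0 → e ∈ H) ∧ ∀ x, ∑ᶠ e ∈ {e | x ∈ e}, g e ≤ 1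

theorem IsFractionalMatching.support_subset {g : Set α → ℝ} (hg : IsFractionalMatching H g) :
    support g ⊆ H :=
  fun e he => hg.2.1 e he

theorem IsFractionalMatching.le_one_of_mem {g : Set α → ℝ} (hfin : H.Finite)
    (hg : IsFractionalMatching H g) {e : Set α} {x : α} (hx : x ∈ e) : g e ≤ 1 :=
  calc g e = {e | x ∈ e}.indicator g e := (Set.indicator_of_mem (s := {e | x ∈ e}) hx g).symm
    _ ≤ ∑ᶠ e', {e | x ∈ e}.indicator g e' :=
      single_le_finsum e ((hfin.subset hg.support_subset).subset
        (by rw [Set.support_indicator]; exact Set.inter_subset_right)) fun e' =>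
          Set.indicator_nonneg (fun e' _ => hg.1 e') e'
    _ ≤ 1 := (finsum_mem_def _ g).symm.trans_le (hg.2.2 x)

theorem IsFractionalMatching.finsum_le_nuStar {g : Set α → ℝ} (hfin : H.Finite)
    (hne : ∀ e ∈ H, e.Nonempty) (hg : IsFractionalMatching H g) : ∑ᶠ e, g e ≤ nuStar H := by
  refine le_csSup ⟨hfin.toFinset.card, ?_⟩ ⟨g, hg.1, hg.2.1, hg.2.2, rfl⟩
  rintro _ ⟨g', hg'0, hg'H, hg'1, rfl⟩
  have hg' : IsFractionalMatching H g' := ⟨hg'0, hg'H, hg'1⟩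
  rw [finsum_eq_sum_of_support_subset g' fun e he => hfin.mem_toFinset.2 (hg'H e he)]
  simpa using sum_le_card_nsmul _ _ 1 fun e he =>
    have ⟨x, hx⟩ := hne e (hfin.mem_toFinset.1 he)
    hg'.le_one_of_mem hfin hx

theorem sum_le_nuStar_of_forall_sum_incident_le_one {E : Finset (Set α)}
    (hne : ∀ e ∈ E, e.Nonempty) {P : Finset α}
    (hP : ∀ x, ∃ p ∈ P, incidentEdges (↑E) p = incidentEdges (↑E) x)
    (g : E → ℝ) (hg0 : 0 ≤ g) (hgP : ∀ p ∈ P, ∑ e : E with p ∈ e.1, g e ≤ 1) :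
    ∑ e, g e ≤ nuStar (E : Set (Set α)) := by
  let G : Set α → ℝ := fun e => if h : e ∈ E then g ⟨e, h⟩ else 0
  have hsupp : support G ⊆ E := fun e he => by
    by_contra h
    exact he (dif_neg h)
  have hsum (s : Set (Set α)) : ∑ᶠ e ∈ s, G e = ∑ e : E with e.1 ∈ s, g e := by
    rw [finsum_mem_eq_sum_of_inter_support_eq G (t := E.filter (· ∈ s)) (by ext; aesop)]
    simp [sum_filter, ← sum_coe_sort E, G]
  have hG : IsFractionalMatching (↑E) G := by
    refine ⟨fun e => dite_nonneg (fun _ => hg0 _) fun _ => le_rfl, fun e he => hsupp he,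
      fun x => ?_⟩
    obtain ⟨p, hp, hpx⟩ := hP x
    have hsub : univ.filter (fun e : E => x ∈ e.1) ⊆ univ.filter (fun e : E => p ∈ e.1) :=
      fun e => by
        have : e.1 ∈ incidentEdges (↑E) x → e.1 ∈ incidentEdges (↑E) p := by
          rw [hpx]
          exact id
        simpa [incidentEdges] using this
    rw [hsum]
    exact (sum_le_sum_of_subset_of_nonneg hsub fun e _ _ => hg0 e).trans (hgP p hp)
  have := hG.finsum_le_nuStar E.finite_toSet hne
  rw [← finsum_mem_univ, hsum] at this
  simpa using this

theorem exists_fractionalCover_le_nuStar (hfin : H.Finite) (hne : ∀ e ∈ H, e.Nonempty) :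
    ∃ (P : Finset α) (w : P → ℝ), 0 ≤ w ∧ (∀ e ∈ H, 1 ≤ ∑ p with ↑p ∈ e, w p) ∧
      ∑ p, w p ≤ nuStar H := by
  obtain ⟨E, rfl⟩ := hfin.exists_finset_coe
  obtain ⟨P, hP⟩ := exists_finset_incidentEdges_eq hfin
  let A : Matrix E P ℝ := fun e p => if p.1 ∈ e.1 then 1 else 0
  obtain ⟨w, hw0, hwA, hw⟩ := A.exists_cover_le_of_forall_packing_le (nuStar (E : Set (Set α)))
    fun g hg0 hgA => sum_le_nuStar_of_forall_sum_incident_le_one hne hP g hg0 fun p hp => by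
      simpa [A, vecMul, dotProduct, sum_filter] using hgA ⟨p, hp⟩
  refine ⟨P, w, hw0, fun e he => ?_, hw⟩
  simpa [A, mulVec, dotProduct, sum_filter] using hwA ⟨e, he⟩

theorem tau_le_card {C : Finset α} (hC : ∀ e ∈ H, ∃ x ∈ C, x ∈ e) : tau H ≤ C.card :=
  Nat.sInf_le ⟨C, hC, rfl⟩

end Hypergraph

section WeightedPoints

variable {κ : Type*} [Fintype κ] {w : κ → ℝ}

theorem sum_filter_mem_iUnion_le {β ι : Type*} [Fintype ι] (f : κ → β) (hw : 0 ≤ w)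
    (s : ι → Set β) : ∑ k with f k ∈ ⋃ i, s i, w k ≤ ∑ i, ∑ k with f k ∈ s i, w k := by
  simp only [sum_filter]
  rw [sum_comm]
  refine sum_le_sum fun k _ => ?_
  split_ifs with hk
  · obtain ⟨i, hi⟩ := Set.mem_iUnion.1 hk
    exact (if_pos hi).symm.le.trans (single_le_sum (f := fun i => if f k ∈ s i then w k else 0)
      (fun i _ => ite_nonneg (hw k) le_rfl) (mem_univ i))
  · exact sum_nonneg fun i _ => ite_nonneg (hw k) le_rfl

theorem exists_one_le_mul_sum_of_one_le_sum_iUnion {β ι : Type*} [Fintype ι] (f : κ → β)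
    (hw : 0 ≤ w) (s : ι → Set β) {d : ℕ} (hd : Fintype.card ι ≤ d)
    (h : 1 ≤ ∑ k with f k ∈ ⋃ i, s i, w k) : ∃ i, 1 ≤ d * ∑ k with f k ∈ s i, w k := by
  rcases isEmpty_or_nonempty ι with hι | hι
  · norm_num at h
  obtain ⟨i, -, hi⟩ := exists_le_of_sum_le univ_nonempty (f := fun _ => (1 : ℝ))
    (g := fun i => d * ∑ k with f k ∈ s i, w k) <| by
      calc ∑ i : ι, (1 : ℝ) = Fintype.card ι := by simp
        _ ≤ d * 1 := by rw [mul_one]; exact_mod_cast hd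
        _ ≤ d * ∑ i, ∑ k with f k ∈ s i, w k := by
          gcongr
          exact h.trans (sum_filter_mem_iUnion_le f hw s)
        _ = _ := mul_sum _ _ _
  exact ⟨i, hi⟩

theorem IsDInterval.exists_Icc_subset_one_le_sum {d : ℕ} {e : Set ℝ} (he : IsDInterval d e)
    (f : κ → ℝ) (hw : 0 ≤ w) (h : 1 ≤ ∑ k with f k ∈ e, w k) :
    ∃ q : ℝ × ℝ, Set.Icc q.1 q.2 ⊆ e ∧ 1 ≤ ∑ k with f k ∈ Set.Icc q.1 q.2, d * w k := by
  obtain ⟨n, a, b, hn, -, -, rfl⟩ := he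
  obtain ⟨i, hi⟩ := exists_one_le_mul_sum_of_one_le_sum_iUnion f hw _ (by simpa using hn) h
  exact ⟨(a i, b i), Set.subset_iUnion (fun i => Set.Icc (a i) (b i)) i,
    by simpa [← mul_sum] using hi⟩

theorem exists_finset_hitting_Icc_card_le_sum (f : κ → ℝ) (S : Finset (ℝ × ℝ)) (hw : 0 ≤ w)
    (hS : ∀ q ∈ S, 1 ≤ ∑ k with f k ∈ Set.Icc q.1 q.2, w k) :
    ∃ C : Finset ℝ, (∀ q ∈ S, ∃ x ∈ C, x ∈ Set.Icc q.1 q.2) ∧ (C.card : ℝ) ≤ ∑ k, w k := by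
  induction S using Finset.strongInduction generalizing w with
  | H S ih =>
  rcases S.eq_empty_or_nonempty with rfl | hne
  · exact ⟨∅, by simp, by simpa using sum_nonneg fun k _ => hw k⟩
  obtain ⟨q₀, hq₀, hmin⟩ := S.exists_min_image Prod.snd hne
  have hq₀le : q₀.1 ≤ q₀.2 := by
    by_contra hlt
    have := hS q₀ hq₀
    norm_num [Set.Icc_eq_empty hlt] at this
  let w' : κ → ℝ := fun k => if q₀.2 < f k then w k else 0
  obtain ⟨C, hC, hcard⟩ := ih (S.filter fun q => q₀.2 < q.1)
    (filter_ssubset.2 ⟨q₀, hq₀, not_lt.2 hq₀le⟩) (w := w') (fun k => ite_nonneg (hw k) le_rfl)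
    fun q hq => by
      rw [mem_filter] at hq
      refine (hS q hq.1).trans_eq (sum_congr rfl fun k hk => ?_)
      exact (if_pos (hq.2.trans_le (mem_filter.1 hk).2.1)).symm
  refine ⟨insert q₀.2 C, fun q hq => ?_, ?_⟩
  · by_cases hlt : q₀.2 < q.1
    · obtain ⟨x, hx, hxq⟩ := hC q (mem_filter.2 ⟨hq, hlt⟩)
      exact ⟨x, mem_insert_of_mem hx, hxq⟩
    · exact ⟨q₀.2, mem_insert_self _ _, not_lt.1 hlt, hmin q hq⟩
  · calc ((insert q₀.2 C).card : ℝ) ≤ C.card + 1 := by exact_mod_cast card_insert_le _ _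
      _ ≤ ∑ k with q₀.2 < f k, w k + ∑ k with f k ∈ Set.Icc q₀.1 q₀.2, w k := by
          rw [sum_filter]
          exact add_le_add hcard (hS q₀ hq₀)
      _ ≤ ∑ k with q₀.2 < f k, w k + ∑ k with ¬ q₀.2 < f k, w k := by
          refine add_le_add_right (sum_le_sum_of_subset_of_nonneg (fun k hk => ?_)
            fun k _ _ => hw k) _
          exact mem_filter.2 ⟨mem_univ k, not_lt.2 (mem_filter.1 hk).2.2⟩
      _ = ∑ k, w k := sum_filter_add_sum_filter_not _ _ _

end WeightedPoints

theorem tau_le_d_mul_nuStar_general (d : ℕ)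
    (H : Set (Set ℝ)) (hfin : H.Finite)
    (hH : ∀ e ∈ H, IsDInterval d e ∧ e.Nonempty) :
    (tau H : ℝ) ≤ d * nuStar H := by
  obtain ⟨P, w, hw0, hcover, hw⟩ := exists_fractionalCover_le_nuStar hfin fun e he => (hH e he).2
  have hheavy (e : Set ℝ) (he : e ∈ H) :=
    (hH e he).1.exists_Icc_subset_one_le_sum (↑) hw0 (hcover e he)
  choose! q hqe hq using hheavy
  obtain ⟨C, hC, hcard⟩ := exists_finset_hitting_Icc_card_le_sum ((↑) : P → ℝ)
    (hfin.toFinset.image q) (w := fun p => d * w p) (fun p => mul_nonneg d.cast_nonneg (hw0 p))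
    (by simpa using hq)
  have hτ : tau H ≤ C.card := tau_le_card fun e he => by
    obtain ⟨x, hx, hxe⟩ := hC (q e) (mem_image_of_mem q (hfin.mem_toFinset.2 he))
    exact ⟨x, hx, hqe e he hxe⟩
  calc (tau H : ℝ) ≤ C.card := by exact_mod_cast hτ
    _ ≤ ∑ p, d * w p := hcard
    _ = d * ∑ p, w p := (mul_sum _ _ _).symm
    _ ≤ d * nuStar H := by gcongr

/-- For a finite hypergraph of `d`-intervals, `ν*(H) ≥ τ(H)/d`, i.e.
`τ(H) ≤ d·ν*(H)`. -/
theorem tau_le_d_mul_nuStar (d : ℕ) (hd : 1 ≤ d)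
    (H : Set (Set ℝ)) (hfin : H.Finite)
    (hH : ∀ e ∈ H, IsDInterval d e ∧ e.Nonempty) :
    (tau H : ℝ) ≤ d * nuStar H :=
  tau_le_d_mul_nuStar_general d H hfin hH
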